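/- Padding lemma for the anonymous-header construction: let s_0, …, s_{l−1} ∈ {0,1}^k and FS_0, …, FS_{l−1} ∈ {0,1}^{|FS|}, and let (FS_i, γ_i, β_i), 0 ≤ i ≤ l−1, and φ_0, …, φ_{l−1} be produced by the create_ahdr construction. Then for every 0 ≤ i ≤ l−1, the string β_i has length (r−1)c and its trailing i·c bits equal φ_i, i.e., (β_i)_[(r−1−i)c..(r−1)c−1] = φ_i. -/

import Mathlib

/-- Bit strings: finite sequences of bits. -/
abbrev BS : Type := List Bool

/-- Bitwise XOR of (equal-length) bit strings. -/
def bxor (σ τ : BS) : BS := List.zipWith xor σ τ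

/-- Substring from bit position `a` through `b` inclusive (0-indexed). -/
def substr (σ : BS) (a b : ℕ) : BS := (σ.drop a).take (b + 1 - a)

/-- All-zero string of length `a`. -/
def zeros (a : ℕ) : BS := List.replicate a false

/-!
The last `i·c` bits of `β_i` are the part of the body that hop `i` shifts in from `β_{i+1}`,
masked with the PRG stream of hop `i`; by the induction hypothesis they are the first `i·c`
bits of `φ_{i+1}`, i.e. `φ_i` masked with the very same stream, so the two masks cancel.
-/

section BitString

variable {σ τ : BS}

theorem length_bxor : (bxor σ τ).length = min σ.length τ.length :=
  List.length_zipWith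

theorem take_bxor (n : ℕ) : (bxor σ τ).take n = bxor (σ.take n) (τ.take n) :=
  List.take_zipWith

theorem drop_bxor (n : ℕ) : (bxor σ τ).drop n = bxor (σ.drop n) (τ.drop n) :=
  List.drop_zipWith

theorem bxor_bxor_cancel_right (h : σ.length ≤ τ.length) : bxor (bxor σ τ) τ = σ := by
  apply List.ext_getElem
  · simp only [length_bxor]
    omega
  · intro j _ _
    simp [bxor]

theorem substr_eq_drop {b : ℕ} (a : ℕ) (h : σ.length ≤ b + 1) : substr σ a b = σ.drop a :=
  List.take_of_length_le (by simp only [List.length_drop]; omega)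

/-- `b - 1` truncates at `b = 0`, so `substr σ 0 (n - 1)` keeps one bit even when `n = 0`. -/
theorem substr_zero_sub_one (n : ℕ) : substr σ 0 (n - 1) = σ.take (max n 1) := by
  rw [substr, List.drop_zero]
  congr 1
  omega

theorem drop_bxor_append_take {H β G φ z : BS} {a : ℕ}
    (hG : H.length + a + φ.length ≤ G.length)
    (hβ : β.drop a = bxor (φ ++ z) (G.drop (H.length + a))) :
    (bxor (H ++ β.take (a + φ.length)) (G.take (H.length + a + φ.length))).drop
      (H.length + a) = φ := by
  rw [drop_bxor, List.drop_length_add_append, List.drop_take, List.drop_take,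
    Nat.add_sub_cancel_left, Nat.add_sub_cancel_left, hβ, take_bxor, List.take_left' rfl]
  refine bxor_bxor_cancel_right ?_
  simp only [List.length_take, List.length_drop]
  omega

end BitString

namespace CreateAhdr

variable {c r l : ℕ} {G H φ β : ℕ → BS}

theorem length_phi (hG : ∀ i, (G i).length = r * c) (hlr : l ≤ r) (hφ0 : φ 0 = [])
    (hφ : ∀ i, i + 1 < l → φ (i + 1) =
      bxor (φ i ++ zeros c) (substr (G i) ((r - 1 - i) * c) (r * c - 1))) :
    ∀ i, i < l → (φ i).length = i * c := by
  intro i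
  induction i with
  | zero => simp [hφ0]
  | succ i ih =>
    intro hi
    have hsplit : r * c = (r - 1 - i) * c + (i * c + c) := by
      rw [← Nat.succ_mul, ← Nat.add_mul, show r - 1 - i + i.succ = r by omega]
    rw [hφ i hi, length_bxor, substr_eq_drop _ (by rw [hG]; omega), List.length_drop,
      List.length_append, ih (by omega), zeros, List.length_replicate, hG, Nat.succ_mul]
    omega

theorem length_beta (hG : ∀ i, (G i).length = r * c)
    (hH : ∀ i, i + 1 < l → (H (i + 1)).length = c) (hlr : l ≤ r)
    {ρ : BS} (hρ : ρ.length = (r - l) * c) (hφ : (φ (l - 1)).length = (l - 1) * c)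
    (hβlast : β (l - 1) = ρ ++ φ (l - 1))
    (hβ : ∀ i, i + 1 < l → β i =
      bxor (H (i + 1) ++ substr (β (i + 1)) 0 ((r - 2) * c - 1))
           (substr (G i) 0 ((r - 1) * c - 1))) :
    ∀ i, i < l → (β i).length = (r - 1) * c := by
  intro i hi
  induction Nat.le_sub_one_of_lt hi using Nat.decreasingInduction with
  | self =>
    rw [hβlast, List.length_append, hρ, hφ, ← Nat.add_mul, show r - l + (l - 1) = r - 1 by omega]
  | of_succ i hil ih =>
    have hi1 : i + 1 < l := by omega
    have h1 : (r - 1) * c = (r - 2) * c + c := by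
      rw [← Nat.succ_mul, show (r - 2).succ = r - 1 by omega]
    have h2 : r * c = (r - 1) * c + c := by
      rw [← Nat.succ_mul, show (r - 1).succ = r by omega]
    rw [hβ i hi1, length_bxor, List.length_append, substr_zero_sub_one, substr_zero_sub_one,
      List.length_take, List.length_take, ih hi1, hH i hi1, hG]
    omega

theorem drop_beta (hc : 0 < c) (hG : ∀ i, (G i).length = r * c)
    (hH : ∀ i, i + 1 < l → (H (i + 1)).length = c) (hlr : l ≤ r) (hφ0 : φ 0 = [])
    (hφ : ∀ i, i + 1 < l → φ (i + 1) =
      bxor (φ i ++ zeros c) (substr (G i) ((r - 1 - i) * c) (r * c - 1)))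
    {ρ : BS} (hρ : ρ.length = (r - l) * c) (hβlast : β (l - 1) = ρ ++ φ (l - 1))
    (hβ : ∀ i, i + 1 < l → β i =
      bxor (H (i + 1) ++ substr (β (i + 1)) 0 ((r - 2) * c - 1))
           (substr (G i) 0 ((r - 1) * c - 1))) :
    ∀ i, i < l → (β i).drop ((r - 1 - i) * c) = φ i := by
  intro i hi
  have hφlen := length_phi hG hlr hφ0 hφ
  have hβlen := length_beta hG hH hlr hρ (hφlen _ (by omega)) hβlast hβ
  induction Nat.le_sub_one_of_lt hi using Nat.decreasingInduction with
  | self => rw [hβlast, show r - 1 - (l - 1) = r - l by omega, List.drop_left' hρ]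
  | of_succ i hil ih =>
    have hi1 : i + 1 < l := by omega
    rcases Nat.eq_zero_or_pos i with rfl | hi0
    · rw [hφ0, List.drop_eq_nil_of_le (by simp [hβlen 0 hi])]
    have hφi := hφlen i hi
    have hpos : 1 ≤ (r - 2) * c := Nat.mul_pos (by omega) hc
    have hpos' : 1 ≤ (r - 1) * c := Nat.mul_pos (by omega) hc
    have hHa : (r - 1 - i) * c = (H (i + 1)).length + (r - 2 - i) * c := by
      rw [hH i hi1, show r - 1 - i = 1 + (r - 2 - i) by omega, Nat.add_mul, one_mul]
    have hab : (r - 2) * c = (r - 2 - i) * c + (φ i).length := by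
      rw [hφi, ← Nat.add_mul, show r - 2 - i + i = r - 2 by omega]
    have hHab : (r - 1) * c = (H (i + 1)).length + (r - 2 - i) * c + (φ i).length := by
      rw [← hHa, hφi, ← Nat.add_mul, show r - 1 - i + i = r - 1 by omega]
    have hstep := ih hi1
    rw [show r - 1 - (i + 1) = r - 2 - i by omega, hφ i hi1,
      substr_eq_drop _ (by rw [hG]; omega), hHa] at hstep
    rw [hβ i hi1, substr_zero_sub_one, substr_zero_sub_one, max_eq_left hpos,
      max_eq_left hpos', hab, hHab, hHa]
    exact drop_bxor_append_take (by rw [← hHab, hG]; exact Nat.mul_le_mul_right c (by omega))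
      hstep

end CreateAhdr

theorem create_ahdr_padding_general
    (k fsl r l : ℕ) (hk : 1 ≤ k)
    (hlr : l ≤ r)
    (c : ℕ) (hc : c = fsl + k)
    (PRG2 : BS → BS) (hPRG2len : ∀ x, (PRG2 x).length = r * c)
    (MAC : BS → BS → BS) (hMAClen : ∀ key msg, (MAC key msg).length = k)
    (hPRG2 hMAC : BS → BS)
    (s FS : ℕ → BS)
    (hFS : ∀ i, i < l → (FS i).length = fsl)
    (φ β γ : ℕ → BS)
    (hφ0 : φ 0 = [])
    (hφ : ∀ i, i + 1 < l → φ (i + 1) =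
      bxor (φ i ++ zeros c) (substr (PRG2 (hPRG2 (s i))) ((r - 1 - i) * c) (r * c - 1)))
    (ρ : BS) (hρ : ρ.length = (r - l) * c)
    (hβlast : β (l - 1) = ρ ++ φ (l - 1))
    (hγlast : γ (l - 1) = MAC (hMAC (s (l - 1))) (FS (l - 1) ++ β (l - 1)))
    (hβ : ∀ i, i + 1 < l → β i =
      bxor (FS (i + 1) ++ γ (i + 1) ++ substr (β (i + 1)) 0 ((r - 2) * c - 1))
           (substr (PRG2 (hPRG2 (s i))) 0 ((r - 1) * c - 1)))
    (hγ : ∀ i, i + 1 < l → γ i = MAC (hMAC (s i)) (FS i ++ β i)) :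
    ∀ i, i < l → (β i).length = (r - 1) * c ∧
      substr (β i) ((r - 1 - i) * c) ((r - 1) * c - 1) = φ i := by
  have hG : ∀ i, (PRG2 (hPRG2 (s i))).length = r * c := fun i => hPRG2len _
  have hH : ∀ i, i + 1 < l → (FS (i + 1) ++ γ (i + 1)).length = c := by
    intro i hi
    have hγlen : (γ (i + 1)).length = k := by
      rcases Nat.lt_or_ge (i + 1 + 1) l with h | h
      · rw [hγ _ h, hMAClen]
      · rw [show i + 1 = l - 1 by omega, hγlast, hMAClen]
    rw [List.length_append, hFS _ hi, hγlen, hc]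
  intro i hi
  have hβlen := CreateAhdr.length_beta (H := fun i => FS i ++ γ i) hG hH hlr hρ
    (CreateAhdr.length_phi hG hlr hφ0 hφ _ (by omega)) hβlast hβ
  refine ⟨hβlen i hi, ?_⟩
  rw [substr_eq_drop _ (by rw [hβlen i hi]; omega)]
  exact CreateAhdr.drop_beta (H := fun i => FS i ++ γ i) (by omega) hG hH hlr hφ0 hφ hρ hβlast hβ
    i hi

/-- Padding lemma for the anonymous-header construction
(`create_ahdr`, Algorithm 4): each `β i` has length `(r-1)·c` and its
trailing `i·c` bits equal the padding string `φ i`. -/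
theorem create_ahdr_padding
    (k fsl r l : ℕ) (hk : 1 ≤ k) (hfsl : k ≤ fsl) (hr : 1 ≤ r)
    (hl1 : 1 ≤ l) (hlr : l ≤ r)
    (c : ℕ) (hc : c = fsl + k)
    (PRG2 : BS → BS) (hPRG2len : ∀ x, (PRG2 x).length = r * c)
    (MAC : BS → BS → BS) (hMAClen : ∀ key msg, (MAC key msg).length = k)
    (hPRG2 hMAC : BS → BS)
    (hhPRG2len : ∀ x, (hPRG2 x).length = k) (hhMAClen : ∀ x, (hMAC x).length = k)
    (s FS : ℕ → BS)
    (hs : ∀ i, i < l → (s i).length = k)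
    (hFS : ∀ i, i < l → (FS i).length = fsl)
    (φ β γ : ℕ → BS)
    (hφ0 : φ 0 = [])
    (hφ : ∀ i, i + 1 < l → φ (i + 1) =
      bxor (φ i ++ zeros c) (substr (PRG2 (hPRG2 (s i))) ((r - 1 - i) * c) (r * c - 1)))
    (ρ : BS) (hρ : ρ.length = (r - l) * c)
    (hβlast : β (l - 1) = ρ ++ φ (l - 1))
    (hγlast : γ (l - 1) = MAC (hMAC (s (l - 1))) (FS (l - 1) ++ β (l - 1)))
    (hβ : ∀ i, i + 1 < l → β i =
      bxor (FS (i + 1) ++ γ (i + 1) ++ substr (β (i + 1)) 0 ((r - 2) * c - 1))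
           (substr (PRG2 (hPRG2 (s i))) 0 ((r - 1) * c - 1)))
    (hγ : ∀ i, i + 1 < l → γ i = MAC (hMAC (s i)) (FS i ++ β i)) :
    ∀ i, i < l → (β i).length = (r - 1) * c ∧
      substr (β i) ((r - 1 - i) * c) ((r - 1) * c - 1) = φ i :=
  create_ahdr_padding_general k fsl r l hk hlr c hc PRG2 hPRG2len MAC hMAClen hPRG2 hMAC s FS hFS φ
    β γ hφ0 hφ ρ hρ hβlast hγlast hβ hγ
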